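/- arXiv:1109.6365 — 3 statements merged into one kernel-verified Lean document; each statement's English description precedes it below -/
import Mathlib

section
/- Let j : ℝ → M₃(ℝ) be a differentiable curve of symmetric matrices and ν, n : ℝ → ℝ³ differentiable curves satisfying dj/dt = [ν̂, j] and dn/dt = ν × n. Fix E ∈ ℝ³, r ∈ ℝ, ẑ ∈ ℝ³ and set σ := r ẑ + n. Then at each time t the spatial Chaplygin-ball equation d/dt(j ν) + (j ν) × ν + (1/2) →[j, ν νᵀ] − E × n = −(ν̇ × σ) × σ − (ν × ṅ) × σ holds if and only if the equivalent form (j + σ̂ σ̂) ν̇ = E × n + ν × (j ν) + σ × (ν × (ν × n)) holds. -/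
/-!
Since `ν̂ ν = ν × ν = 0`, the advection equation `j̇ = [ν̂, j]` gives `d/dt (j ν) = ν × (j ν) + j ν̇`.
For symmetric `j` one has `[j, ν νᵀ] = (j ν) νᵀ - ν (j ν)ᵀ`, whose arrow is `2 (j ν) × ν`, and
`(ν̇ × σ) × σ = σ̂ σ̂ ν̇`. After these three substitutions the two equations differ only by moving
terms across the equality sign and by antisymmetry of the cross product.
-/

open Matrix BigOperators

/-- Levi-Civita symbol on three indices, `eps 0 1 2 = 1`. -/
noncomputable def eps (i j k : Fin 3) : ℝ :=
  (((j : ℕ) : ℝ) - ((i : ℕ) : ℝ)) * (((k : ℕ) : ℝ) - ((j : ℕ) : ℝ)) *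
    (((k : ℕ) : ℝ) - ((i : ℕ) : ℝ)) / 2

/-- The hat map: `(hat ν) j k = -∑ l, ε_{jkl} ν l`, so that `hat ν *ᵥ w = ν × w`. -/
noncomputable def hat (ν : Fin 3 → ℝ) : Matrix (Fin 3) (Fin 3) ℝ :=
  Matrix.of fun j k => -(∑ l, eps j k l * ν l)

/-- The "arrow" map `(→A)_i = ∑_{j,k} ε_{ijk} A j k`. -/
noncomputable def arrow (A : Matrix (Fin 3) (Fin 3) ℝ) : Fin 3 → ℝ :=
  fun i => ∑ j, ∑ k, eps i j k * A j k

theorem hat_mulVec (v w : Fin 3 → ℝ) : hat v *ᵥ w = v ⨯₃ w := by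
  ext i
  fin_cases i <;>
    simp only [hat, eps, mulVec, dotProduct, of_apply, Fin.sum_univ_three, cross_apply,
      Fin.val_zero, Fin.val_one, Fin.val_two, Nat.cast_one, Nat.cast_ofNat, Fin.reduceFinMk,
      cons_val_zero, cons_val_one, cons_val_two, head_cons, tail_cons] <;>
    ring

theorem arrow_vecMulVec_sub_vecMulVec (a b : Fin 3 → ℝ) :
    arrow (vecMulVec a b - vecMulVec b a) = (2 : ℝ) • a ⨯₃ b := by
  ext i
  fin_cases i <;>
    simp only [arrow, eps, Matrix.sub_apply, vecMulVec_apply, Fin.sum_univ_three, cross_apply,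
      Fin.val_zero, Fin.val_one, Fin.val_two, Nat.cast_one, Nat.cast_ofNat, Fin.reduceFinMk,
      cons_val_zero, cons_val_one, cons_val_two, head_cons, tail_cons, Pi.smul_apply,
      smul_eq_mul] <;>
    ring

theorem arrow_mul_vecMulVec_self_sub {J : Matrix (Fin 3) (Fin 3) ℝ} (hJ : Jᵀ = J)
    (v : Fin 3 → ℝ) :
    arrow (J * vecMulVec v v - vecMulVec v v * J) = (2 : ℝ) • (J *ᵥ v) ⨯₃ v := by
  rw [mul_vecMulVec, vecMulVec_mul, ← mulVec_transpose, hJ, arrow_vecMulVec_sub_vecMulVec]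

theorem hat_mul_hat_mulVec (s a : Fin 3 → ℝ) : (hat s * hat s) *ᵥ a = a ⨯₃ s ⨯₃ s := by
  rw [← mulVec_mulVec, hat_mulVec, hat_mulVec, ← cross_anticomm a s, map_neg, cross_anticomm]

theorem commutator_hat_mulVec_self (J : Matrix (Fin 3) (Fin 3) ℝ) (v : Fin 3 → ℝ) :
    (hat v * J - J * hat v) *ᵥ v = v ⨯₃ (J *ᵥ v) := by
  rw [sub_mulVec, ← mulVec_mulVec, ← mulVec_mulVec, hat_mulVec, hat_mulVec, cross_self,
    mulVec_zero, sub_zero]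

theorem HasDerivAt.mulVec {𝕜 : Type*} [NontriviallyNormedField 𝕜] {m n : Type*}
    [Fintype m] [Fintype n] {A : 𝕜 → Matrix m n 𝕜} {A' : Matrix m n 𝕜} {x : 𝕜 → n → 𝕜}
    {x' : n → 𝕜} {t : 𝕜} (hA : ∀ i k, HasDerivAt (fun s => A s i k) (A' i k) t)
    (hx : HasDerivAt x x' t) :
    HasDerivAt (fun s => A s *ᵥ x s) (A' *ᵥ x t + A t *ᵥ x') t := by
  rw [hasDerivAt_pi] at hx ⊢
  intro i
  simpa only [Matrix.mulVec, dotProduct, Pi.add_apply, ← Finset.sum_add_distrib] using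
    HasDerivAt.fun_sum fun k _ => (hA i k).fun_mul (hx k)

theorem chaplygin_ball_equation_equivalent_forms_general
    (j : ℝ → Matrix (Fin 3) (Fin 3) ℝ) (ν ν' n : ℝ → Fin 3 → ℝ)
    (E zhat : Fin 3 → ℝ) (r : ℝ)
    (hsym : ∀ t, (j t)ᵀ = j t)
    (hj : ∀ t i k, HasDerivAt (fun s => j s i k)
        ((hat (ν t) * j t - j t * hat (ν t)) i k) t)
    (hν : ∀ t, HasDerivAt ν (ν' t) t) (t : ℝ) :
    HasDerivAt (fun s => j s *ᵥ ν s)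
        (crossProduct E (n t) - crossProduct (j t *ᵥ ν t) (ν t)
          - (1/2 : ℝ) • arrow (j t * vecMulVec (ν t) (ν t) - vecMulVec (ν t) (ν t) * j t)
          - crossProduct (crossProduct (ν' t) (r • zhat + n t)) (r • zhat + n t)
          - crossProduct (crossProduct (ν t) (crossProduct (ν t) (n t))) (r • zhat + n t)) t
    ↔ (j t + hat (r • zhat + n t) * hat (r • zhat + n t)) *ᵥ ν' t
        = crossProduct E (n t) + crossProduct (ν t) (j t *ᵥ ν t)
          + crossProduct (r • zhat + n t)
              (crossProduct (ν t) (crossProduct (ν t) (n t))) := by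
  have hderiv := HasDerivAt.mulVec (hj t) (hν t)
  rw [commutator_hat_mulVec_self] at hderiv
  rw [arrow_mul_vecMulVec_self_sub (hsym t), add_mulVec, hat_mul_hat_mulVec]
  have hjν := cross_anticomm' (j t *ᵥ ν t) (ν t)
  have hσ := cross_anticomm' (ν t ⨯₃ (ν t ⨯₃ n t)) (r • zhat + n t)
  constructor
  · intro h
    linear_combination (norm := module) -(h.unique hderiv) - (2 : ℝ) • hjν - hσ
  · intro h
    convert hderiv using 1
    linear_combination (norm := module) -h - (2 : ℝ) • hjν - hσ

/-- along curves satisfying the advection equations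
`dj/dt = [ν̂, j]` and `dn/dt = ν × n`, and with `σ = r ẑ + n`, the spatial
Chaplygin-ball equation
`d/dt(j ν) + (j ν) × ν + (1/2) →[j, ν νᵀ] − E × n = −(ν̇ × σ) × σ − (ν × ṅ) × σ`
holds at `t` iff the equivalent form
`(j + σ̂ σ̂) ν̇ = E × n + ν × (j ν) + σ × (ν × (ν × n))` holds. -/
theorem chaplygin_ball_equation_equivalent_forms
    (j : ℝ → Matrix (Fin 3) (Fin 3) ℝ) (ν ν' n : ℝ → Fin 3 → ℝ)
    (E zhat : Fin 3 → ℝ) (r : ℝ)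
    (hsym : ∀ t, (j t)ᵀ = j t)
    (hj : ∀ t i k, HasDerivAt (fun s => j s i k)
        ((hat (ν t) * j t - j t * hat (ν t)) i k) t)
    (hn : ∀ t, HasDerivAt n (crossProduct (ν t) (n t)) t)
    (hν : ∀ t, HasDerivAt ν (ν' t) t) (t : ℝ) :
    HasDerivAt (fun s => j s *ᵥ ν s)
        (crossProduct E (n t) - crossProduct (j t *ᵥ ν t) (ν t)
          - (1/2 : ℝ) • arrow (j t * vecMulVec (ν t) (ν t) - vecMulVec (ν t) (ν t) * j t)
          - crossProduct (crossProduct (ν' t) (r • zhat + n t)) (r • zhat + n t)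
          - crossProduct (crossProduct (ν t) (crossProduct (ν t) (n t))) (r • zhat + n t)) t
    ↔ (j t + hat (r • zhat + n t) * hat (r • zhat + n t)) *ᵥ ν' t
        = crossProduct E (n t) + crossProduct (ν t) (j t *ᵥ ν t)
          + crossProduct (r • zhat + n t)
              (crossProduct (ν t) (crossProduct (ν t) (n t))) :=
  chaplygin_ball_equation_equivalent_forms_general j ν ν' n E zhat r hsym hj hν t
end

section
/- Let N = ℝ³ × ℝ³ × M₃(ℝ) (coordinates (ν, n, j), identified with ℝ¹⁵ with Lebesgue measure). Let a : ℝ × ℝ³ × N → ℝ³ be C¹, and let φ : ℝ × ℝ³ × N → ℝ be C¹ such that for every compact K ⊆ ℝ × ℝ³ there is a compact C ⊆ N containing the support of φ(t, x, ·) for all (t, x) ∈ K. Suppose φ satisfies the kinetic equation ∂φ/∂t + (ν × σ(n)) · ∇_x φ + (ν × n) · ∇_n φ + Tr((∂φ/∂j)ᵀ [ν̂, j]) + div_ν(φ a) = 0 everywhere, where ∂φ/∂j is the matrix of partial derivatives of φ with respect to the entries of j and div_ν(φ a) = Σ_i ∂(φ a_i)/∂ν_i. Let q : N → ℝ be C¹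 and suppose ∇_n q · (ν × n) + ∇_ν q · a(t, x, ν, n, j) + Tr((∂q/∂j)ᵀ [ν̂, j]) = 0 for all (t, x, ν, n, j). Then Q(t, x) := ∫_N q(ν, n, j) φ(t, x, ν, n, j) dν dn dj satisfies the continuity equation ∂Q/∂t + div_x ∫_N q φ (ν × σ(n)) dν dn dj = 0 at every (t, x). -/
/-!
Integrate the kinetic equation against `q` over `N`. Differentiating under the integral sign
(legitimate because `φ(t, x, ·)` is supported in a fixed compact set for `(t, x)` near a given
point) turns the first two terms into `∂Q/∂t + div_x ∫ q φ (ν × σ(n))`. The remaining terms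
integrate to zero: the field `(ν × n, [ν̂, j])` is divergence free, since its `n_i`-component does
not depend on `n_i` and its `j_kl`-component does not depend on `j_kl` (`ν̂` has zero diagonal),
so integrating by parts moves all derivatives onto `q`, and what is left is the integral of `-φ`
times the left-hand side of the equation satisfied by `q`, which vanishes.
-/

open Matrix MeasureTheory BigOperators

/-- The internal phase space `N = ℝ³ × ℝ³ × M₃(ℝ)` with coordinates `(ν, n, j)`. -/
abbrev NSpace := (Fin 3 → ℝ) × (Fin 3 → ℝ) × (Fin 3 → Fin 3 → ℝ)

instance : (volume : Measure (Fin 3 → ℝ)).IsAddHaarMeasure := isAddHaarMeasure_volume_pi (Fin 3)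

instance : (volume : Measure ((Fin 3 → ℝ) × (Fin 3 → Fin 3 → ℝ))).IsAddHaarMeasure :=
  Measure.prod.instIsAddHaarMeasure _ _

instance : (volume : Measure NSpace).IsAddHaarMeasure := Measure.prod.instIsAddHaarMeasure _ _

section Calculus

variable {E F : Type*} [NormedAddCommGroup E] [NormedSpace ℝ E] [NormedAddCommGroup F]
  [NormedSpace ℝ F]

theorem fderiv_apply_eq_zero_of_forall_add_smul {f : E → F} {x v : E}
    (h : ∀ s : ℝ, f (x + s • v) = f x) : fderiv ℝ f x v = 0 := by
  by_cases hf : DifferentiableAt ℝ f x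
  · rw [← hf.lineDeriv_eq_fderiv, lineDeriv, funext h, deriv_const]
  · simp [fderiv_zero_of_not_differentiableAt hf]

theorem fderiv_mul_apply_of_forall_add_smul {ψ w : E → ℝ} {x v : E}
    (hψ : DifferentiableAt ℝ ψ x) (hw : DifferentiableAt ℝ w x)
    (h : ∀ s : ℝ, w (x + s • v) = w x) :
    fderiv ℝ (fun y => ψ y * w y) x v = w x * fderiv ℝ ψ x v := by
  rw [fderiv_fun_mul hψ hw]
  simp [fderiv_apply_eq_zero_of_forall_add_smul h]

variable {G H : Type*} [NormedAddCommGroup G] [NormedSpace ℝ G] [NormedAddCommGroup H]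
  [NormedSpace ℝ H]

theorem fderiv_comp_mk_mk_apply {f : E × F × G → H} {a : E} {b : F} {c : G}
    (hf : DifferentiableAt ℝ f (a, b, c)) (v : G) :
    fderiv ℝ (fun y => f (a, b, y)) c v = fderiv ℝ f (a, b, c) (0, 0, v) := by
  have hincl : HasFDerivAt (fun y : G => (a, b, y))
      ((0 : G →L[ℝ] E).prod ((0 : G →L[ℝ] F).prod (.id ℝ G))) c :=
    (hasFDerivAt_const a c).prodMk ((hasFDerivAt_const b c).prodMk (hasFDerivAt_id c))
  rw [HasFDerivAt.fderiv (f := fun y => f (a, b, y)) (hf.hasFDerivAt.comp c hincl)]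
  rfl

theorem fderiv_comp_prodAssoc_apply (f : E × F × G → H) (z w : E × F) (p v : G) :
    fderiv ℝ (f ∘ ContinuousLinearEquiv.prodAssoc ℝ E F G) (z, p) (w, v)
      = fderiv ℝ f (z.1, z.2, p) (w.1, w.2, v) := by
  rw [ContinuousLinearEquiv.comp_right_fderiv]
  rfl

end Calculus

section IntegrationByParts

variable {E : Type*} [NormedAddCommGroup E] [NormedSpace ℝ E] [FiniteDimensional ℝ E]
  [MeasurableSpace E] [BorelSpace E] {μ : Measure E} [μ.IsAddHaarMeasure]

theorem integral_mul_fderiv_eq_neg_fderiv_mul_of_hasCompactSupport {f g : E → ℝ}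
    (hf : ContDiff ℝ 1 f) (hg : ContDiff ℝ 1 g) (hgc : HasCompactSupport g) (v : E) :
    ∫ x, f x * fderiv ℝ g x v ∂μ = -∫ x, fderiv ℝ f x v * g x ∂μ := by
  have hf' : Continuous fun x => fderiv ℝ f x v :=
    (hf.continuous_fderiv one_ne_zero).clm_apply continuous_const
  have hg' : Continuous fun x => fderiv ℝ g x v :=
    (hg.continuous_fderiv one_ne_zero).clm_apply continuous_const
  have hg'c : HasCompactSupport fun x => fderiv ℝ g x v :=
    hgc.fderiv_apply (𝕜 := ℝ) v
  exact integral_mul_fderiv_eq_neg_fderiv_mul_of_integrable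
    ((hf'.mul hg.continuous).integrable_of_hasCompactSupport hgc.mul_left)
    ((hf.continuous.mul hg').integrable_of_hasCompactSupport hg'c.mul_left)
    ((hf.continuous.mul hg.continuous).integrable_of_hasCompactSupport hgc.mul_left)
    (fun x _ => hf.differentiable one_ne_zero x) (fun x _ => hg.differentiable one_ne_zero x)

/-- In coordinates with respect to `β`, this is `∫ q div (ψ W) = -∫ ψ ∇q · W`. -/
theorem integral_mul_sum_fderiv_mul_repr_eq_neg {ι : Type*} [Fintype ι] (β : Module.Basis ι ℝ E)
    {q ψ : E → ℝ} {W : E → E} (hq : ContDiff ℝ 1 q) (hψ : ContDiff ℝ 1 ψ)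
    (hψc : HasCompactSupport ψ) (hW : ContDiff ℝ 1 W) :
    ∫ x, q x * ∑ k, fderiv ℝ (fun y => ψ y * β.repr (W y) k) x (β k) ∂μ
      = -∫ x, ψ x * fderiv ℝ q x (W x) ∂μ := by
  have hψW : ∀ k, ContDiff ℝ 1 fun y => ψ y * β.repr (W y) k := fun k =>
    hψ.mul ((LinearMap.toContinuousLinearMap (β.coord k)).contDiff.comp hW)
  have hint : ∀ k, Integrable (fun x => q x * fderiv ℝ (fun y => ψ y * β.repr (W y) k) x (β k)) μ :=
    fun k => (hq.continuous.mul (((hψW k).continuous_fderiv one_ne_zero).clm_apply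
      continuous_const)).integrable_of_hasCompactSupport
        ((hψc.mul_right.fderiv_apply (𝕜 := ℝ) (β k)).mul_left)
  have hint' : ∀ k, Integrable (fun x => fderiv ℝ q x (β k) * (ψ x * β.repr (W x) k)) μ :=
    fun k => (((hq.continuous_fderiv one_ne_zero).clm_apply continuous_const).mul
      (hψW k).continuous).integrable_of_hasCompactSupport hψc.mul_right.mul_left
  have hW_expand : ∀ x, ψ x * fderiv ℝ q x (W x)
      = ∑ k, fderiv ℝ q x (β k) * (ψ x * β.repr (W x) k) := by
    intro x
    conv_lhs => rw [← β.sum_repr (W x)]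
    simp only [map_sum, map_smul, smul_eq_mul, Finset.mul_sum]
    exact Finset.sum_congr rfl fun k _ => by ring
  simp_rw [Finset.mul_sum, hW_expand]
  rw [integral_finsetSum _ fun k _ => hint k, integral_finsetSum _ fun k _ => hint' k,
    ← Finset.sum_neg_distrib]
  exact Finset.sum_congr rfl fun k _ =>
    integral_mul_fderiv_eq_neg_fderiv_mul_of_hasCompactSupport hq (hψW k) hψc.mul_right (β k)

end IntegrationByParts

section ParametricIntegral

variable {P N : Type*} [NormedAddCommGroup P] [NormedAddCommGroup N] {F : P × N → ℝ}

def HasLocallyUniformCompactSupport (F : P × N → ℝ) : Prop :=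
  ∀ K : Set P, IsCompact K →
    ∃ C : Set N, IsCompact C ∧ ∀ z ∈ K, Function.support (fun p => F (z, p)) ⊆ C

theorem HasLocallyUniformCompactSupport.hasCompactSupport
    (hsupp : HasLocallyUniformCompactSupport F) (z : P) : HasCompactSupport fun p => F (z, p) := by
  obtain ⟨C, hC, hCsupp⟩ := hsupp _ (isCompact_singleton (x := z))
  exact HasCompactSupport.intro hC fun p hp =>
    Function.notMem_support.1 fun h => hp (hCsupp z rfl h)

variable [NormedSpace ℝ P] [NormedSpace ℝ N]

theorem fderiv_comp_inl_eq_zero_of_notMem {K : Set P} {C : Set N} (hF : Differentiable ℝ F)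
    (hC : ∀ z ∈ K, Function.support (fun p => F (z, p)) ⊆ C) {z : P} (hK : K ∈ nhds z)
    {p : N} (hp : p ∉ C) :
    (fderiv ℝ F (z, p)).comp (.inl ℝ P N) = 0 := by
  have hzero : (fun z' => F (z', p)) =ᶠ[nhds z] fun _ => 0 :=
    Filter.eventually_of_mem hK fun z' hz' => Function.notMem_support.1 fun h => hp (hC z' hz' h)
  have hd : HasFDerivAt (fun z' => F (z', p)) ((fderiv ℝ F (z, p)).comp (.inl ℝ P N)) z :=
    (hF _).hasFDerivAt.comp z (hasFDerivAt_prodMk_left z p)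
  rw [← hd.fderiv, hzero.fderiv_eq, fderiv_const_apply]

variable [ProperSpace P] [MeasurableSpace N] [BorelSpace N]
  {μ : Measure N} [IsFiniteMeasureOnCompacts μ] {g : N → ℝ}

theorem integrable_smul_fderiv_comp_inl (hF : ContDiff ℝ 1 F)
    (hsupp : HasLocallyUniformCompactSupport F) (hg : Continuous g) (z₀ : P) :
    Integrable (fun p => g p • (fderiv ℝ F (z₀, p)).comp (.inl ℝ P N)) μ := by
  obtain ⟨C, hC, hCsupp⟩ := hsupp _ (isCompact_closedBall z₀ 1)
  refine (hg.smul ((hF.continuous_fderiv one_ne_zero).comp (Continuous.prodMk_right z₀)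
    |>.clm_comp continuous_const)).integrable_of_hasCompactSupport
    (HasCompactSupport.intro hC fun p hp => ?_)
  simp [fderiv_comp_inl_eq_zero_of_notMem (hF.differentiable one_ne_zero) hCsupp
    (Metric.closedBall_mem_nhds z₀ one_pos) hp]

theorem integral_smul_fderiv_comp_inl_apply (hF : ContDiff ℝ 1 F)
    (hsupp : HasLocallyUniformCompactSupport F) (hg : Continuous g) (z₀ w : P) :
    (∫ p, g p • (fderiv ℝ F (z₀, p)).comp (.inl ℝ P N) ∂μ) w
      = ∫ p, g p * fderiv ℝ F (z₀, p) (w, 0) ∂μ := by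
  simp [ContinuousLinearMap.integral_apply (integrable_smul_fderiv_comp_inl hF hsupp hg z₀)]

theorem integrable_mul_fderiv_apply_inl (hF : ContDiff ℝ 1 F)
    (hsupp : HasLocallyUniformCompactSupport F) (hg : Continuous g) (z₀ w : P) :
    Integrable (fun p => g p * fderiv ℝ F (z₀, p) (w, 0)) μ := by
  simpa using (integrable_smul_fderiv_comp_inl (μ := μ) hF hsupp hg z₀).apply_continuousLinearMap w

variable (μ) in
theorem hasFDerivAt_integral_mul (hF : ContDiff ℝ 1 F) (hsupp : HasLocallyUniformCompactSupport F)
    (hg : Continuous g) (z₀ : P) :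
    HasFDerivAt (fun z => ∫ p, g p * F (z, p) ∂μ)
      (∫ p, g p • (fderiv ℝ F (z₀, p)).comp (.inl ℝ P N) ∂μ) z₀ := by
  obtain ⟨C, hC, hCsupp⟩ := hsupp _ (isCompact_closedBall z₀ 1)
  have hFd := hF.differentiable one_ne_zero
  have hF' : Continuous fun zp : P × N => g zp.2 • (fderiv ℝ F zp).comp (.inl ℝ P N) :=
    (hg.comp continuous_snd).smul
      ((hF.continuous_fderiv one_ne_zero).clm_comp continuous_const)
  obtain ⟨M, hM⟩ := ((isCompact_closedBall z₀ 1).prod hC).exists_bound_of_continuousOn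
    hF'.continuousOn
  refine hasFDerivAt_integral_of_dominated_of_fderiv_le (Metric.ball_mem_nhds z₀ one_pos)
    (F' := fun z p => g p • (fderiv ℝ F (z, p)).comp (.inl ℝ P N))
    (bound := C.indicator fun _ => M) ?_ ?_
    (integrable_smul_fderiv_comp_inl hF hsupp hg z₀).aestronglyMeasurable ?_ ?_ ?_
  · exact Filter.Eventually.of_forall fun z =>
      (hg.mul (hF.continuous.comp (Continuous.prodMk_right z))).aestronglyMeasurable
  · exact (hg.mul (hF.continuous.comp (Continuous.prodMk_right z₀))).integrable_of_hasCompactSupport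
      (hsupp.hasCompactSupport z₀).mul_left
  · refine Filter.Eventually.of_forall fun p z hz => ?_
    by_cases hp : p ∈ C
    · simpa [hp] using hM (z, p) ⟨Metric.ball_subset_closedBall hz, hp⟩
    · have hK : Metric.closedBall z₀ 1 ∈ nhds z :=
        Filter.mem_of_superset (Metric.isOpen_ball.mem_nhds hz) Metric.ball_subset_closedBall
      simp [hp, fderiv_comp_inl_eq_zero_of_notMem hFd hCsupp hK hp]
  · exact (integrable_indicator_iff hC.isClosed.measurableSet).2
      (integrableOn_const hC.measure_lt_top.ne)
  · exact Filter.Eventually.of_forall fun p z _ =>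
      ((hFd _).hasFDerivAt.comp z (hasFDerivAt_prodMk_left z p)).const_mul (g p)

end ParametricIntegral

@[fun_prop]
theorem Continuous.crossProduct {α : Type*} [TopologicalSpace α] {f g : α → Fin 3 → ℝ}
    (hf : Continuous f) (hg : Continuous g) : Continuous fun x => crossProduct (f x) (g x) := by
  simp only [cross_apply]
  fun_prop

@[fun_prop]
theorem ContDiff.crossProduct {α : Type*} [NormedAddCommGroup α] [NormedSpace ℝ α]
    {n : WithTop ℕ∞} {f g : α → Fin 3 → ℝ} (hf : ContDiff ℝ n f) (hg : ContDiff ℝ n g) :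
    ContDiff ℝ n fun x => crossProduct (f x) (g x) := by
  have hf' := contDiff_pi.1 hf
  have hg' := contDiff_pi.1 hg
  refine contDiff_pi.2 fun i => ?_
  fin_cases i <;>
    simp only [cross_apply, Fin.zero_eta, Fin.mk_one, Fin.reduceFinMk, cons_val_zero, cons_val_one,
      cons_val] <;>
    fun_prop

theorem hat_apply_self (ν : Fin 3 → ℝ) (k : Fin 3) : hat ν k k = 0 := by
  simp [hat, eps]

/-- The `(n, j)`-components `(ν × n, [ν̂, j])` of the characteristic field of the kinetic
equation. -/
noncomputable def rotField (p : NSpace) : (Fin 3 → ℝ) × (Fin 3 → Fin 3 → ℝ) :=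
  (crossProduct p.1 p.2.1, Matrix.of.symm (hat p.1 * Matrix.of p.2.2 - Matrix.of p.2.2 * hat p.1))

theorem contDiff_rotField : ContDiff ℝ 1 rotField := by
  refine ContDiff.prodMk (by fun_prop) (contDiff_pi.2 fun k => contDiff_pi.2 fun l => ?_)
  simp only [Matrix.of_symm_apply, Matrix.sub_apply, Matrix.mul_apply, hat, Matrix.of_apply]
  fun_prop

theorem rotField_fst_add_smul_apply_self (p : NSpace) (s : ℝ) (i : Fin 3) :
    (rotField (p + s • (0, Pi.single i 1, 0))).1 i = (rotField p).1 i := by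
  have h : crossProduct p.1 (Pi.single i 1) i = 0 := by
    simpa [single_dotProduct] using dot_cross_self p.1 (Pi.single i (1 : ℝ))
  simp [rotField, h]

theorem rotField_snd_add_smul_apply_self (p : NSpace) (s : ℝ) (k l : Fin 3) :
    (rotField (p + s • (0, 0, Pi.single k (Pi.single l 1)))).2 k l = (rotField p).2 k l := by
  have h : Matrix.of (p.2.2 + s • (Pi.single k (Pi.single l 1 : Fin 3 → ℝ) : Fin 3 → Fin 3 → ℝ))
      = Matrix.of p.2.2 + s • Matrix.single k l 1 := by
    rw [← of_symm_single]; rfl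
  simp [rotField, h, mul_add, add_mul, mul_single_apply_same, single_mul_apply_same,
    hat_apply_self]

noncomputable def nBasis : Module.Basis (Fin 3 ⊕ Fin 3 ⊕ (Σ _ : Fin 3, Fin 3)) ℝ NSpace :=
  (Pi.basisFun ℝ (Fin 3)).prod
    ((Pi.basisFun ℝ (Fin 3)).prod (Pi.basis fun _ => Pi.basisFun ℝ (Fin 3)))

theorem sum_fderiv_mul_repr_nBasis {ψ : NSpace → ℝ} {b : Fin 3 → NSpace → ℝ}
    (hψ : Differentiable ℝ ψ) (p : NSpace) :
    ∑ k, fderiv ℝ (fun y => ψ y * nBasis.repr (fun i => b i y, rotField y) k) p (nBasis k)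
      = fderiv ℝ ψ p (0, rotField p)
        + ∑ i, fderiv ℝ (fun y => ψ y * b i y) p (Pi.single i 1, 0) := by
  have hrot := contDiff_rotField.differentiable one_ne_zero
  have hfst : ∀ i, fderiv ℝ (fun y => ψ y * (rotField y).1 i) p (0, Pi.single i 1, 0)
      = (rotField p).1 i * fderiv ℝ ψ p (0, Pi.single i 1, 0) := fun i =>
    fderiv_mul_apply_of_forall_add_smul (hψ p) (differentiableAt_pi.1 (hrot.fst p) i)
      (rotField_fst_add_smul_apply_self p · i)
  have hsnd : ∀ k l, fderiv ℝ (fun y => ψ y * (rotField y).2 k l) p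
        (0, 0, Pi.single k (Pi.single l 1))
      = (rotField p).2 k l * fderiv ℝ ψ p (0, 0, Pi.single k (Pi.single l 1)) := fun k l =>
    fderiv_mul_apply_of_forall_add_smul (hψ p)
      (differentiableAt_pi.1 (differentiableAt_pi.1 (hrot.snd p) k) l)
      (rotField_snd_add_smul_apply_self p · k l)
  have hexpand : fderiv ℝ ψ p (0, rotField p)
      = ∑ i, (rotField p).1 i * fderiv ℝ ψ p (0, Pi.single i 1, 0)
        + ∑ k, ∑ l, (rotField p).2 k l * fderiv ℝ ψ p (0, 0, Pi.single k (Pi.single l 1)) := by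
    conv_lhs => rw [← nBasis.sum_repr (0, rotField p)]
    simp only [map_sum, map_smul, smul_eq_mul]
    simp [nBasis, Fintype.sum_sum_type, Fintype.sum_sigma]
  simp only [nBasis, Module.Basis.prod_apply, LinearMap.coe_inl, LinearMap.coe_inr,
    Fintype.sum_sum_type, Module.Basis.prod_repr_inl, Pi.basisFun_repr, Sum.elim_inl,
    Function.comp_apply, Pi.basisFun_apply, Module.Basis.prod_repr_inr, Sum.elim_inr, hfst,
    Pi.basis_repr, Pi.basis_apply, hsnd, Fintype.sum_sigma, hexpand]
  ring

theorem integral_mul_fderiv_rotField_add_sum_eq_zero {q ψ : NSpace → ℝ}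
    {b : Fin 3 → NSpace → ℝ} (hq : ContDiff ℝ 1 q) (hψ : ContDiff ℝ 1 ψ)
    (hψc : HasCompactSupport ψ) (hb : ∀ i, ContDiff ℝ 1 (b i))
    (hqb : ∀ p, fderiv ℝ q p (fun i => b i p, rotField p) = 0) :
    ∫ p, q p * (fderiv ℝ ψ p (0, rotField p)
      + ∑ i, fderiv ℝ (fun y => ψ y * b i y) p (Pi.single i 1, 0)) = 0 := by
  have h := integral_mul_sum_fderiv_mul_repr_eq_neg (μ := volume) nBasis hq hψ hψc
    ((contDiff_pi.2 hb).prodMk contDiff_rotField)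
  simpa only [hqb, mul_zero, integral_zero, neg_zero,
    sum_fderiv_mul_repr_nBasis (hψ.differentiable one_ne_zero)] using h

theorem fderiv_time_add_sum_space_eq_neg_of_kinetic {φ : ℝ × (Fin 3 → ℝ) × NSpace → ℝ}
    {a : ℝ × (Fin 3 → ℝ) × NSpace → Fin 3 → ℝ} (hφ : Differentiable ℝ φ)
    (ha : Differentiable ℝ a) {t : ℝ} {x : Fin 3 → ℝ} {p : NSpace} (c : Fin 3 → ℝ)
    (hkin : fderiv ℝ φ (t, x, p) (1, c, 0, rotField p)
      + ∑ i, fderiv ℝ (fun v => φ v * a v i) (t, x, p) (0, 0, Pi.single i 1, 0) = 0) :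
    fderiv ℝ φ (t, x, p) (1, 0, 0) + ∑ i, c i * fderiv ℝ φ (t, x, p) (0, Pi.single i 1, 0)
      = -(fderiv ℝ (fun y => φ (t, x, y)) p (0, rotField p)
        + ∑ i, fderiv ℝ (fun y => φ (t, x, y) * a (t, x, y) i) p (Pi.single i 1, 0)) := by
  have hdecomp : ((1 : ℝ), c, ((0 : Fin 3 → ℝ), rotField p))
      = ((1 : ℝ), (0 : Fin 3 → ℝ), (0 : NSpace))
        + ∑ i, c i • ((0 : ℝ), Pi.single i 1, (0 : NSpace)) + (0, 0, 0, rotField p) := by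
    ext <;> simp [Prod.fst_sum, Prod.snd_sum, Pi.single_apply]
  have hrestrict : ∀ i v, fderiv ℝ (fun y => φ (t, x, y) * a (t, x, y) i) p v
      = fderiv ℝ (fun v => φ v * a v i) (t, x, p) (0, 0, v) := fun i v =>
    fderiv_comp_mk_mk_apply (hφ.mul (differentiable_pi.1 ha i) _) v
  rw [hdecomp] at hkin
  simp only [map_add, map_sum, map_smul, smul_eq_mul] at hkin
  simp only [fderiv_comp_mk_mk_apply (hφ _), hrestrict]
  linear_combination hkin

theorem integral_mul_fderiv_time_add_flux_eq_zero {φ : ℝ × (Fin 3 → ℝ) × NSpace → ℝ}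
    {a : ℝ × (Fin 3 → ℝ) × NSpace → Fin 3 → ℝ} {q : NSpace → ℝ} {c : NSpace → Fin 3 → ℝ}
    (hφ : ContDiff ℝ 1 φ) (ha : ContDiff ℝ 1 a) (hq : ContDiff ℝ 1 q) (hc : Continuous c)
    (hsupp : HasLocallyUniformCompactSupport
      (φ ∘ ContinuousLinearEquiv.prodAssoc ℝ ℝ (Fin 3 → ℝ) NSpace))
    (t : ℝ) (x : Fin 3 → ℝ)
    (hkin : ∀ p, fderiv ℝ φ (t, x, p) (1, c p, 0, rotField p)
      + ∑ i, fderiv ℝ (fun v => φ v * a v i) (t, x, p) (0, 0, Pi.single i 1, 0) = 0)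
    (hqid : ∀ p, fderiv ℝ q p (a (t, x, p), rotField p) = 0) :
    (∫ p, q p * fderiv ℝ φ (t, x, p) (1, 0, 0))
      + ∑ i, ∫ p, q p * c p i * fderiv ℝ φ (t, x, p) (0, Pi.single i 1, 0) = 0 := by
  have hF := hφ.comp (ContinuousLinearEquiv.prodAssoc ℝ ℝ (Fin 3 → ℝ) NSpace).contDiff
  have htime := integrable_mul_fderiv_apply_inl (μ := volume) hF hsupp hq.continuous (t, x) (1, 0)
  have hspace := fun i => integrable_mul_fderiv_apply_inl (μ := volume) hF hsupp
    (g := fun p => q p * c p i) (by fun_prop) (t, x) (0, Pi.single i 1)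
  simp only [fderiv_comp_prodAssoc_apply] at htime hspace
  have hpoint : ∀ p, q p * fderiv ℝ φ (t, x, p) (1, 0, 0)
      + ∑ i, q p * c p i * fderiv ℝ φ (t, x, p) (0, Pi.single i 1, 0)
      = -(q p * (fderiv ℝ (fun y => φ (t, x, y)) p (0, rotField p)
        + ∑ i, fderiv ℝ (fun y => φ (t, x, y) * a (t, x, y) i) p (Pi.single i 1, 0))) := by
    intro p
    simp only [mul_assoc, ← Finset.mul_sum]
    linear_combination (q p) * fderiv_time_add_sum_space_eq_neg_of_kinetic
      (hφ.differentiable one_ne_zero) (ha.differentiable one_ne_zero) (c p) (hkin p)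
  rw [← integral_finsetSum _ fun i _ => hspace i,
    ← integral_add htime (integrable_finsetSum _ fun i _ => hspace i)]
  simp only [hpoint, integral_neg, neg_eq_zero]
  exact integral_mul_fderiv_rotField_add_sum_eq_zero hq (by fun_prop)
    (hsupp.hasCompactSupport (t, x)) (fun i => by fun_prop) hqid

/-- if a compactly supported (in `N`, locally uniformly in `(t,x)`)
C¹ density `φ(t, x, ν, n, j)` satisfies the kinetic equation
`∂φ/∂t + (ν × σ(n))·∇ₓφ + (ν × n)·∇ₙφ + Tr((∂φ/∂j)ᵀ [ν̂, j]) + div_ν(φ a) = 0`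
(here: the directional derivative of `φ` in direction
`(1, ν × σ(n), 0, ν × n, [ν̂, j])` plus `∑ᵢ ∂(φ aᵢ)/∂νᵢ` vanishes), and a C¹
function `q(ν, n, j)` satisfies
`∇ₙq·(ν × n) + ∇_νq·a + Tr((∂q/∂j)ᵀ [ν̂, j]) = 0`, then
`Q(t,x) = ∫_N q φ` satisfies the continuity equation
`∂Q/∂t + div_x ∫_N q φ (ν × σ(n)) = 0`. -/
theorem moment_continuity_equation (r : ℝ) (zhat : Fin 3 → ℝ)
    (a : ℝ × (Fin 3 → ℝ) × NSpace → Fin 3 → ℝ)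
    (φ : ℝ × (Fin 3 → ℝ) × NSpace → ℝ)
    (q : NSpace → ℝ)
    (ha : ContDiff ℝ 1 a) (hφ : ContDiff ℝ 1 φ) (hq : ContDiff ℝ 1 q)
    (hsupp : ∀ K : Set (ℝ × (Fin 3 → ℝ)), IsCompact K →
      ∃ C : Set NSpace, IsCompact C ∧
        ∀ tx ∈ K, Function.support (fun p : NSpace => φ (tx.1, tx.2, p)) ⊆ C)
    (hkin : ∀ u : ℝ × (Fin 3 → ℝ) × NSpace,
      fderiv ℝ φ u
          (1, crossProduct u.2.2.1 (r • zhat + u.2.2.2.1), 0,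
            crossProduct u.2.2.1 u.2.2.2.1,
            Matrix.of.symm
              (hat u.2.2.1 * Matrix.of u.2.2.2.2 - Matrix.of u.2.2.2.2 * hat u.2.2.1))
        + ∑ i, fderiv ℝ (fun v => φ v * a v i) u (0, 0, Pi.single i 1, 0, 0) = 0)
    (hqid : ∀ u : ℝ × (Fin 3 → ℝ) × NSpace,
      fderiv ℝ q u.2.2
          (a u, crossProduct u.2.2.1 u.2.2.2.1,
            Matrix.of.symm
              (hat u.2.2.1 * Matrix.of u.2.2.2.2 - Matrix.of u.2.2.2.2 * hat u.2.2.1)) = 0) :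
    ∀ (t : ℝ) (x : Fin 3 → ℝ),
      (∀ i : Fin 3, DifferentiableAt ℝ
          (fun y => ∫ p : NSpace,
            q p * φ (t, y, p) * crossProduct p.1 (r • zhat + p.2.1) i ∂volume) x) ∧
      HasDerivAt (fun s => ∫ p : NSpace, q p * φ (s, x, p) ∂volume)
        (-(∑ i, fderiv ℝ
            (fun y => ∫ p : NSpace,
              q p * φ (t, y, p) * crossProduct p.1 (r • zhat + p.2.1) i ∂volume)
            x (Pi.single i 1))) t := by
  intro t x
  let e := ContinuousLinearEquiv.prodAssoc ℝ ℝ (Fin 3 → ℝ) NSpace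
  have hF : ContDiff ℝ 1 (φ ∘ e) := hφ.comp e.contDiff
  have hc : Continuous fun p : NSpace => crossProduct p.1 (r • zhat + p.2.1) := by fun_prop
  have hflux : ∀ i, HasFDerivAt
      (fun y => ∫ p, q p * φ (t, y, p) * crossProduct p.1 (r • zhat + p.2.1) i)
      ((∫ p, (q p * crossProduct p.1 (r • zhat + p.2.1) i) •
        (fderiv ℝ (φ ∘ e) ((t, x), p)).comp (.inl ℝ _ _)).comp (.inr ℝ ℝ (Fin 3 → ℝ))) x :=
    fun i => ((hasFDerivAt_integral_mul volume hF hsupp (by fun_prop) (t, x)).comp x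
      (hasFDerivAt_prodMk_right t x)).congr_of_eventuallyEq (Filter.Eventually.of_forall
        fun y => integral_congr_ae (Filter.Eventually.of_forall fun p => mul_right_comm _ _ _))
  have hdensity := (hasFDerivAt_integral_mul volume hF hsupp hq.continuous (t, x)).comp_hasDerivAt
    (f := fun s => (s, x)) t ((hasDerivAt_id t).prodMk (hasDerivAt_const t x))
  have hflux_apply : ∀ i, fderiv ℝ
      (fun y => ∫ p, q p * φ (t, y, p) * crossProduct p.1 (r • zhat + p.2.1) i) x (Pi.single i 1)
      = ∫ p, q p * crossProduct p.1 (r • zhat + p.2.1) i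
          * fderiv ℝ φ (t, x, p) (0, Pi.single i 1, 0) := by
    intro i
    rw [(hflux i).fderiv, ContinuousLinearMap.comp_apply, ContinuousLinearMap.inr_apply,
      integral_smul_fderiv_comp_inl_apply hF hsupp (by fun_prop)]
    simp only [e, fderiv_comp_prodAssoc_apply]
  refine ⟨fun i => (hflux i).differentiableAt, hdensity.congr_deriv ?_⟩
  rw [integral_smul_fderiv_comp_inl_apply hF hsupp hq.continuous]
  simp only [e, fderiv_comp_prodAssoc_apply, hflux_apply]
  linarith [integral_mul_fderiv_time_add_flux_eq_zero hφ ha hq hc hsupp t x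
    (fun p => hkin (t, x, p)) (fun p => hqid (t, x, p))]
end

section
/- Let ν₀, n₀ ∈ ℝ³ and let j₀ ∈ M₃(ℝ) be symmetric; suppose n₀ = λ ν₀ for some λ ∈ ℝ, j₀ ν₀ = κ ν₀ for some κ ∈ ℝ, and [ν̂₀, j₀] = 0. Fix x₀ ∈ ℝ³, r ∈ ℝ and ẑ ∈ ℝ³. Then the constant curves ν(t) = ν₀, n(t) = n₀, j(t) = j₀, together with the straight-line motion x(t) = x₀ + t (ν₀ × σ(n₀)), solve the full force-free rolling system: dx/dt = ν × σ(n), dn/dt = ν × n, dj/dt = [ν̂, j], and (j + σ̂(n) σ̂(n)) dν/dt = ν × (j ν) + σ(n) × (ν × (ν × n)). Moreover, the translational velocity equals ν₀ × σ(n₀) = r ν₀ × ẑ, a constant vector. -/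
open Matrix BigOperators

/-! Both `n₀` and `j₀ ν₀` are parallel to `ν₀`, so `ν₀ × n₀` and `ν₀ × (j₀ ν₀)` vanish; together
with `[ν̂₀, j₀] = 0` this makes the right-hand sides of the equations for `n`, `j` and `ν` zero, and
the velocity `ν₀ × σ(n₀) = r ν₀ × ẑ` is constant, so `x` moves on a straight line. -/

theorem cross_eq_zero_of_eq_smul {R : Type*} [CommRing R] {v w : Fin 3 → R} {c : R}
    (h : w = c • v) : v ⨯₃ w = 0 := by
  rw [h, map_smul, cross_self, smul_zero]

theorem hasDerivAt_const_add_smul {𝕜 E : Type*} [NontriviallyNormedField 𝕜]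
    [NormedAddCommGroup E] [NormedSpace 𝕜 E] (x v : E) (t : 𝕜) :
    HasDerivAt (fun s : 𝕜 => x + s • v) v t := by
  simpa using ((hasDerivAt_id t).smul_const v).const_add x

theorem straight_line_rolling_solution_general
    (ν₀ n₀ x₀ zhat : Fin 3 → ℝ) (j₀ : Matrix (Fin 3) (Fin 3) ℝ) (r : ℝ)
    (lam : ℝ) (hlam : n₀ = lam • ν₀)
    (kap : ℝ) (hkap : j₀ *ᵥ ν₀ = kap • ν₀)
    (hcomm : hat ν₀ * j₀ - j₀ * hat ν₀ = 0) :
    (∀ t : ℝ, HasDerivAt (fun s : ℝ => x₀ + s • crossProduct ν₀ (r • zhat + n₀))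
        (crossProduct ν₀ (r • zhat + n₀)) t) ∧
    (∀ t : ℝ, HasDerivAt (fun _ : ℝ => n₀) (crossProduct ν₀ n₀) t) ∧
    (∀ (t : ℝ) (i k : Fin 3), HasDerivAt (fun _ : ℝ => j₀ i k)
        ((hat ν₀ * j₀ - j₀ * hat ν₀) i k) t) ∧
    (∀ t : ℝ, HasDerivAt (fun _ : ℝ => ν₀) (0 : Fin 3 → ℝ) t) ∧
    (j₀ + hat (r • zhat + n₀) * hat (r • zhat + n₀)) *ᵥ (0 : Fin 3 → ℝ)
      = crossProduct ν₀ (j₀ *ᵥ ν₀)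
        + crossProduct (r • zhat + n₀) (crossProduct ν₀ (crossProduct ν₀ n₀)) ∧
    crossProduct ν₀ (r • zhat + n₀) = r • crossProduct ν₀ zhat := by
  have hn : ν₀ ⨯₃ n₀ = 0 := cross_eq_zero_of_eq_smul hlam
  have hj : ν₀ ⨯₃ (j₀ *ᵥ ν₀) = 0 := cross_eq_zero_of_eq_smul hkap
  refine ⟨fun t => hasDerivAt_const_add_smul x₀ _ t, fun t => hn ▸ hasDerivAt_const t n₀,
    fun t i k => ?_, fun t => hasDerivAt_const t ν₀, ?_, ?_⟩
  · rw [hcomm]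
    exact hasDerivAt_const t (j₀ i k)
  · rw [mulVec_zero, hj, hn, map_zero, map_zero, add_zero]
  · rw [map_add, map_smul, hn, add_zero]

/-- under the alignment assumptions `n₀ = λ ν₀`, `j₀ ν₀ = κ ν₀`,
`[ν̂₀, j₀] = 0`, the constant curves `ν ≡ ν₀`, `n ≡ n₀`, `j ≡ j₀`, together with
the straight-line motion `x(t) = x₀ + t (ν₀ × σ(n₀))`, solve the full force-free
rolling system, and the translational velocity equals
`ν₀ × σ(n₀) = r ν₀ × ẑ`, a constant vector. -/
theorem straight_line_rolling_solution
    (ν₀ n₀ x₀ zhat : Fin 3 → ℝ) (j₀ : Matrix (Fin 3) (Fin 3) ℝ) (r : ℝ)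
    (hsym : j₀ᵀ = j₀)
    (lam : ℝ) (hlam : n₀ = lam • ν₀)
    (kap : ℝ) (hkap : j₀ *ᵥ ν₀ = kap • ν₀)
    (hcomm : hat ν₀ * j₀ - j₀ * hat ν₀ = 0) :
    (∀ t : ℝ, HasDerivAt (fun s : ℝ => x₀ + s • crossProduct ν₀ (r • zhat + n₀))
        (crossProduct ν₀ (r • zhat + n₀)) t) ∧
    (∀ t : ℝ, HasDerivAt (fun _ : ℝ => n₀) (crossProduct ν₀ n₀) t) ∧
    (∀ (t : ℝ) (i k : Fin 3), HasDerivAt (fun _ : ℝ => j₀ i k)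
        ((hat ν₀ * j₀ - j₀ * hat ν₀) i k) t) ∧
    (∀ t : ℝ, HasDerivAt (fun _ : ℝ => ν₀) (0 : Fin 3 → ℝ) t) ∧
    (j₀ + hat (r • zhat + n₀) * hat (r • zhat + n₀)) *ᵥ (0 : Fin 3 → ℝ)
      = crossProduct ν₀ (j₀ *ᵥ ν₀)
        + crossProduct (r • zhat + n₀) (crossProduct ν₀ (crossProduct ν₀ n₀)) ∧
    crossProduct ν₀ (r • zhat + n₀) = r • crossProduct ν₀ zhat :=
  straight_line_rolling_solution_general ν₀ n₀ x₀ zhat j₀ r lam hlam kap hkap hcomm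
end
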